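/- arXiv:1811.07105 — 2 statements merged into one kernel-verified Lean document; each statement's English description precedes it below -/
import Mathlib

section
/- Let ε ∈ [0,1] and ρ ∈ (0,1), and let U, V be independent standard normal random variables. Define the single-observation likelihood ratio L₁ := 1 − ε + ε(1−ρ²)^{−1/2} exp(−ρU²/(2(1−ρ)) + ρV²/(2(1+ρ))). Then E[L₁²] = 1 + ε²ρ²/(1−ρ²). -/
/-!
`L₁ = (1 - ε) + ε (1 - ρ²)^{-1/2} e^Q` where `Q` is a diagonal quadratic
form in independent standard normals, so `E[L₁²]` reduces to the one-dimensional identity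
`E[e^{cZ²}] = (1 - 2c)^{-1/2}`. Writing `Q = (1 - a)/2 U² + (1 - b)/2 V²` with `a = 1/(1 - ρ)`,
`b = 1/(1 + ρ)`, one gets `E[e^Q] = (ab)^{-1/2} = √(1 - ρ²)`, and `2Q` has parameters `2a - 1`,
`2b - 1`, whose product is `1`, so `E[e^{2Q}] = 1`.
-/

open MeasureTheory ProbabilityTheory Real Filter Topology

noncomputable section

/-- The standard normal distribution on ℝ. -/
def stdGauss : Measure ℝ := gaussianReal 0 1

/-- Two independent standard normals. -/
def stdGauss2 : Measure (ℝ × ℝ) := stdGauss.prod stdGauss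

/-- `N(0, Σ_ρ)`: the centered bivariate normal with unit marginal variances and
correlation `ρ`, i.e. the law of `(Z₁, ρ Z₁ + √(1-ρ²) Z₂)` for independent standard
normal `Z₁, Z₂`. -/
def biNormal (ρ : ℝ) : Measure (ℝ × ℝ) :=
  stdGauss2.map fun z => (z.1, ρ * z.1 + Real.sqrt (1 - ρ ^ 2) * z.2)

/-- The contamination mixture `P_{ε,ρ} = (1-ε) N(0,Σ₀) + ε N(0,Σ_ρ)`. -/
def mixture (ε ρ : ℝ) : Measure (ℝ × ℝ) :=
  ENNReal.ofReal (1 - ε) • biNormal 0 + ENNReal.ofReal ε • biNormal ρ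

/-- The `n`-fold product (i.i.d.) measure. -/
def iid (n : ℕ) (μ : Measure (ℝ × ℝ)) : Measure (Fin n → ℝ × ℝ) :=
  Measure.pi fun _ => μ
/-- The single-observation likelihood ratio `dP_{ε,ρ}/dN(0,Σ₀)` in the rotated
coordinates `U = (X-Y)/√2`, `V = (X+Y)/√2`, evaluated at `p = (U,V)`. -/
def L1 (ε ρ : ℝ) (p : ℝ × ℝ) : ℝ :=
  1 - ε + ε * (Real.sqrt (1 - ρ ^ 2))⁻¹ *
    Real.exp (-(ρ * p.1 ^ 2) / (2 * (1 - ρ)) + ρ * p.2 ^ 2 / (2 * (1 + ρ)))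

open scoped NNReal

lemma integrable_gaussianReal_iff {μ : ℝ} {v : ℝ≥0} (hv : v ≠ 0) {f : ℝ → ℝ} :
    Integrable f (gaussianReal μ v) ↔ Integrable (fun x ↦ gaussianPDFReal μ v x * f x) := by
  rw [gaussianReal_of_var_ne_zero _ hv, integrable_withDensity_iff_integrable_smul'
    (measurable_gaussianPDF _ _) (ae_of_all _ fun _ ↦ gaussianPDF_lt_top)]
  simp [toReal_gaussianPDF]

lemma gaussianPDFReal_zero_mul_exp_mul_sq (v : ℝ≥0) (c x : ℝ) :
    gaussianPDFReal 0 v x * exp (c * x ^ 2) =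
      (√(2 * π * v))⁻¹ * exp (-((2 * (v : ℝ))⁻¹ - c) * x ^ 2) := by
  rw [gaussianPDFReal, mul_assoc, ← exp_add]
  congr 2
  field_simp
  ring

section GaussianQuadraticExponential

variable {v : ℝ≥0} {c : ℝ}

lemma inv_two_mul_sub_pos (hv : v ≠ 0) (hc : 2 * c * v < 1) : 0 < (2 * (v : ℝ))⁻¹ - c := by
  rw [sub_pos, ← one_div, lt_div_iff₀ (by positivity)]
  linarith

lemma integrable_exp_mul_sq_gaussianReal (hc : 2 * c * v < 1) :
    Integrable (fun x ↦ exp (c * x ^ 2)) (gaussianReal 0 v) := by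
  rcases eq_or_ne v 0 with rfl | hv
  · rw [gaussianReal_zero_var]
    exact integrable_dirac (by simp)
  rw [integrable_gaussianReal_iff hv]
  simp_rw [gaussianPDFReal_zero_mul_exp_mul_sq]
  exact (integrable_exp_neg_mul_sq (inv_two_mul_sub_pos hv hc)).const_mul _

lemma integral_exp_mul_sq_gaussianReal (hc : 2 * c * v < 1) :
    ∫ x, exp (c * x ^ 2) ∂gaussianReal 0 v = (√(1 - 2 * c * v))⁻¹ := by
  rcases eq_or_ne v 0 with rfl | hv
  · simp [gaussianReal_zero_var]
  rw [integral_gaussianReal_eq_integral_smul hv]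
  simp_rw [smul_eq_mul, gaussianPDFReal_zero_mul_exp_mul_sq]
  rw [integral_const_mul, integral_gaussian, ← Real.sqrt_inv,
    ← Real.sqrt_mul (inv_nonneg.2 (by positivity)), ← Real.sqrt_inv]
  have := inv_two_mul_sub_pos hv hc
  congr 1
  field_simp

end GaussianQuadraticExponential

lemma integral_sq_const_add_mul {Ω : Type*} [MeasurableSpace Ω] {μ : Measure Ω}
    [IsProbabilityMeasure μ] {f : Ω → ℝ} (hf : Integrable f μ)
    (hf2 : Integrable (fun x ↦ f x ^ 2) μ) (a b : ℝ) :
    ∫ x, (a + b * f x) ^ 2 ∂μ = a ^ 2 + 2 * a * b * ∫ x, f x ∂μ + b ^ 2 * ∫ x, f x ^ 2 ∂μ := by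
  have hexpand : ∀ x, (a + b * f x) ^ 2 = a ^ 2 + 2 * a * b * f x + b ^ 2 * f x ^ 2 :=
    fun x ↦ by ring
  simp_rw [hexpand]
  rw [integral_add ?_ (hf2.const_mul _), integral_add (integrable_const _) (hf.const_mul _),
    integral_const_mul, integral_const_mul, integral_const, probReal_univ, one_smul]
  exact (integrable_const _).add (hf.const_mul _)

instance : IsProbabilityMeasure stdGauss2 := by
  unfold stdGauss2 stdGauss
  infer_instance

section StdGauss2

variable {a b : ℝ}

lemma integrable_exp_stdGauss2 (ha : 0 < a) (hb : 0 < b) :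
    Integrable (fun p : ℝ × ℝ ↦ exp ((1 - a) / 2 * p.1 ^ 2 + (1 - b) / 2 * p.2 ^ 2))
      stdGauss2 := by
  simp_rw [exp_add]
  exact (integrable_exp_mul_sq_gaussianReal (by push_cast; linarith)).mul_prod
    (integrable_exp_mul_sq_gaussianReal (by push_cast; linarith))

lemma integral_exp_stdGauss2 (ha : 0 < a) (hb : 0 < b) :
    ∫ p, exp ((1 - a) / 2 * p.1 ^ 2 + (1 - b) / 2 * p.2 ^ 2) ∂stdGauss2 = (√(a * b))⁻¹ := by
  simp_rw [exp_add]
  rw [stdGauss2, stdGauss,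
    integral_prod_mul (fun u ↦ exp ((1 - a) / 2 * u ^ 2)) (fun u ↦ exp ((1 - b) / 2 * u ^ 2)),
    integral_exp_mul_sq_gaussianReal (by push_cast; linarith),
    integral_exp_mul_sq_gaussianReal (by push_cast; linarith), ← mul_inv,
    ← Real.sqrt_mul (by push_cast; linarith)]
  push_cast
  ring_nf

lemma integral_sq_const_add_mul_exp_stdGauss2 (ha : 1 / 2 < a) (hb : 1 / 2 < b) (c₀ c₁ : ℝ) :
    ∫ p, (c₀ + c₁ * exp ((1 - a) / 2 * p.1 ^ 2 + (1 - b) / 2 * p.2 ^ 2)) ^ 2 ∂stdGauss2 =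
      c₀ ^ 2 + 2 * c₀ * c₁ * (√(a * b))⁻¹ + c₁ ^ 2 * (√((2 * a - 1) * (2 * b - 1)))⁻¹ := by
  have hsq : ∀ p : ℝ × ℝ, exp ((1 - a) / 2 * p.1 ^ 2 + (1 - b) / 2 * p.2 ^ 2) ^ 2 =
      exp ((1 - (2 * a - 1)) / 2 * p.1 ^ 2 + (1 - (2 * b - 1)) / 2 * p.2 ^ 2) := fun p ↦ by
    rw [sq, ← exp_add]
    ring_nf
  have ha' : 0 < 2 * a - 1 := by linarith
  have hb' : 0 < 2 * b - 1 := by linarith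
  rw [integral_sq_const_add_mul (integrable_exp_stdGauss2 (by linarith) (by linarith))
    (by simpa only [hsq] using integrable_exp_stdGauss2 ha' hb')]
  simp_rw [hsq]
  rw [integral_exp_stdGauss2 (by linarith) (by linarith), integral_exp_stdGauss2 ha' hb']

end StdGauss2

lemma L1_eq (ε : ℝ) {ρ : ℝ} (h₁ : 1 - ρ ≠ 0) (h₂ : 1 + ρ ≠ 0) (p : ℝ × ℝ) :
    L1 ε ρ p = 1 - ε + ε * (√(1 - ρ ^ 2))⁻¹ *
      exp ((1 - (1 - ρ)⁻¹) / 2 * p.1 ^ 2 + (1 - (1 + ρ)⁻¹) / 2 * p.2 ^ 2) := by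
  rw [L1]
  congr 3
  field_simp
  ring

theorem second_moment_L1_general (ε ρ : ℝ) (hρ : ρ ∈ Set.Ioo (0 : ℝ) 1) :
    ∫ p, (L1 ε ρ p) ^ 2 ∂stdGauss2 = 1 + ε ^ 2 * ρ ^ 2 / (1 - ρ ^ 2) := by
  obtain ⟨hρ₀, hρ₁⟩ := hρ
  have h₁ : 0 < 1 - ρ := by linarith
  have h₂ : 0 < 1 + ρ := by linarith
  have ha : 1 / 2 < (1 - ρ)⁻¹ := by
    rw [one_div, inv_lt_inv₀ two_pos h₁]; linarith
  have hb : 1 / 2 < (1 + ρ)⁻¹ := by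
    rw [one_div, inv_lt_inv₀ two_pos h₂]; linarith
  have hab : (1 - ρ)⁻¹ * (1 + ρ)⁻¹ = (1 - ρ ^ 2)⁻¹ := by
    rw [← mul_inv]; ring
  have h2ab : (2 * (1 - ρ)⁻¹ - 1) * (2 * (1 + ρ)⁻¹ - 1) = 1 := by
    field_simp; ring
  have hρ₂ : 0 < 1 - ρ ^ 2 := by nlinarith
  simp_rw [L1_eq ε h₁.ne' h₂.ne', integral_sq_const_add_mul_exp_stdGauss2 ha hb]
  rw [hab, h2ab, Real.sqrt_inv, inv_inv, Real.sqrt_one, inv_one]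
  field_simp
  rw [Real.sq_sqrt hρ₂.le]
  ring

/-- the second moment of the single-observation likelihood ratio under the
null (where `U, V` are independent standard normals) is `1 + ε²ρ²/(1-ρ²)`. -/
theorem second_moment_L1 (ε ρ : ℝ) (hε : ε ∈ Set.Icc (0 : ℝ) 1) (hρ : ρ ∈ Set.Ioo (0 : ℝ) 1) :
    ∫ p, (L1 ε ρ p) ^ 2 ∂stdGauss2 = 1 + ε ^ 2 * ρ ^ 2 / (1 - ρ ^ 2) :=
  second_moment_L1_general ε ρ hρ
end
end

section
/- Let L be a nonnegative random variable on a probability space with E[L] = 1, and let L̄ be a random variable with 0 ≤ L̄ ≤ L almost surely. Then E|L − 1| ≤ (E[L̄²] − 1 + 2(1 − E[L̄]))^{1/2} + (1 − E[L̄]). -/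
open MeasureTheory Filter

/-- the truncation bound `E|L - 1| ≤ (E[L̄²] - 1 + 2(1 - E[L̄]))^{1/2}
+ (1 - E[L̄])` for a nonnegative random variable `L` with `E[L] = 1` and a
truncation `L̄` with `0 ≤ L̄ ≤ L` almost surely. -/
theorem truncation_bound {Ω : Type*} [MeasurableSpace Ω] (μ : Measure Ω)
    [IsProbabilityMeasure μ] (L Lbar : Ω → ℝ)
    (hL_nonneg : ∀ᵐ ω ∂μ, 0 ≤ L ω)
    (hL_int : Integrable L μ) (hL_mean : ∫ ω, L ω ∂μ = 1)
    (hLbar : ∀ᵐ ω ∂μ, 0 ≤ Lbar ω ∧ Lbar ω ≤ L ω)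
    (hLbar_int : Integrable Lbar μ)
    (hLbar_sq_int : Integrable (fun ω => (Lbar ω) ^ 2) μ) :
    ∫ ω, |L ω - 1| ∂μ
      ≤ Real.sqrt ((∫ ω, (Lbar ω) ^ 2 ∂μ) - 1 + 2 * (1 - ∫ ω, Lbar ω ∂μ))
        + (1 - ∫ ω, Lbar ω ∂μ) := by
  set a := ∫ ω, Lbar ω ∂μ with ha
  set S := ∫ ω, (Lbar ω) ^ 2 ∂μ with hS
  -- integrability facts
  have hfabs_int : Integrable (fun ω => |Lbar ω - 1|) μ := (hLbar_int.sub (integrable_const 1)).abs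
  have hf_int : Integrable (fun ω => Lbar ω - 1) μ := hLbar_int.sub (integrable_const 1)
  have hI1 : Integrable (fun ω => (Lbar ω) ^ 2 - 2 * Lbar ω) μ :=
    hLbar_sq_int.sub (hLbar_int.const_mul 2)
  have hfsq_int : Integrable (fun ω => (Lbar ω - 1) ^ 2) μ := by
    have : (fun ω => (Lbar ω - 1) ^ 2)
        = fun ω => (Lbar ω) ^ 2 - 2 * Lbar ω + 1 := by
      funext ω; ring
    rw [this]
    exact hI1.add (integrable_const 1)
  -- value of ∫ (Lbar - 1)^2
  have hfsq_val : ∫ ω, (Lbar ω - 1) ^ 2 ∂μ = S - 2 * a + 1 := by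
    have h1 : (fun ω => (Lbar ω - 1) ^ 2)
        = fun ω => (Lbar ω) ^ 2 - 2 * Lbar ω + 1 := by
      funext ω; ring
    rw [h1, integral_add hI1 (integrable_const 1),
      integral_sub hLbar_sq_int (hLbar_int.const_mul 2), integral_const_mul,
      integral_const]
    simp [ha, hS]
  -- Cauchy-Schwarz: c := ∫|Lbar - 1| satisfies c^2 ≤ ∫ (Lbar-1)^2
  set c := ∫ ω, |Lbar ω - 1| ∂μ with hc
  have hc_nonneg : 0 ≤ c := integral_nonneg fun ω => abs_nonneg _
  have hcs : c ^ 2 ≤ S - 2 * a + 1 := by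
    have hexp : (fun ω => (|Lbar ω - 1| - c) ^ 2)
        = fun ω => (Lbar ω - 1) ^ 2 - 2 * c * |Lbar ω - 1| + c ^ 2 := by
      funext ω; rw [sub_sq, sq_abs]; ring
    have hI2 : Integrable (fun ω => (Lbar ω - 1) ^ 2 - 2 * c * |Lbar ω - 1|) μ :=
      hfsq_int.sub (hfabs_int.const_mul (2 * c))
    have hint : Integrable (fun ω => (|Lbar ω - 1| - c) ^ 2) μ := by
      rw [hexp]
      exact hI2.add (integrable_const _)
    have hpos : 0 ≤ ∫ ω, (|Lbar ω - 1| - c) ^ 2 ∂μ :=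
      integral_nonneg fun ω => sq_nonneg _
    have hval : ∫ ω, (|Lbar ω - 1| - c) ^ 2 ∂μ = (S - 2 * a + 1) - c ^ 2 := by
      rw [hexp, integral_add hI2 (integrable_const _),
        integral_sub hfsq_int (hfabs_int.const_mul (2 * c)), integral_const_mul,
        integral_const, hfsq_val]
      simp [← hc]
      ring
    linarith [hval ▸ hpos]
  have hc_sqrt : c ≤ Real.sqrt (S - 2 * a + 1) := by
    rw [show c = Real.sqrt (c ^ 2) from (Real.sqrt_sq hc_nonneg).symm]
    exact Real.sqrt_le_sqrt hcs
  -- pointwise bound: |L - 1| ≤ |Lbar - 1| + (L - Lbar)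
  have hpt : ∀ᵐ ω ∂μ, |L ω - 1| ≤ |Lbar ω - 1| + (L ω - Lbar ω) := by
    filter_upwards [hLbar] with ω hω
    have h1 : L ω - 1 = (Lbar ω - 1) + (L ω - Lbar ω) := by ring
    calc |L ω - 1| ≤ |Lbar ω - 1| + |L ω - Lbar ω| := by rw [h1]; exact abs_add_le _ _
      _ = |Lbar ω - 1| + (L ω - Lbar ω) := by
          have h2 : |L ω - Lbar ω| = L ω - Lbar ω := abs_of_nonneg (by linarith [hω.2])
          rw [h2]
  have hmain : ∫ ω, |L ω - 1| ∂μ ≤ c + (1 - a) := by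
    have hI4 : Integrable (fun ω => L ω - Lbar ω) μ := hL_int.sub hLbar_int
    have hI3 : Integrable (fun ω => |L ω - 1|) μ :=
      (hL_int.sub (integrable_const 1)).abs
    have hint2 : Integrable (fun ω => |Lbar ω - 1| + (L ω - Lbar ω)) μ :=
      hfabs_int.add hI4
    have := integral_mono_ae hI3 hint2 hpt
    rwa [integral_add hfabs_int hI4,
      integral_sub hL_int hLbar_int, hL_mean, ← hc, ← ha] at this
  have : S - 1 + 2 * (1 - a) = S - 2 * a + 1 := by ring
  rw [this]
  linarith
end
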